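/- arXiv:2010.07090 — 3 statements merged into one kernel-verified Lean document; each statement's English description precedes it below -/
import Mathlib

section
/- Bohr's theorem: if f(z) = Σ_{n≥0} a_n z^n is analytic on the unit disk with |f(z)| < 1 for all |z| < 1, then Σ_{n≥0} |a_n| r^n ≤ 1 for all r ≤ 1/3, and 1/3 is the largest radius for which this holds for all such f. -/
/-!
For `‖f‖ ≤ 1` on the disc and `n ≥ 1`, the coefficient bound `‖a n‖ ≤ 2 (1 - ‖a 0‖)` follows from
Carathéodory's argument on a circle of radius `r < 1`: after rotating `f` so that `a 0 ≥ 0`, the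
boundary function `g` has Fourier coefficients `a n * r ^ n` and none of negative index, so
`a n * r ^ n` is also the `n`-th coefficient of `g + conj g - 2 = 2 (re g - 1) ≤ 0`, whose `L¹`
norm is `2 (1 - a 0)`. Summing, `∑ ‖a n‖ r ^ n ≤ ‖a 0‖ + 2 (1 - ‖a 0‖) r / (1 - r)`, which is
at most `1` for every value of `‖a 0‖` exactly when `r ≤ 1 / 3`.
For `r > 1 / 3` the disc automorphism `z ↦ (w - z) / (1 - conj w * z)` with `w ∈ (0, 1)` close
enough to `1` has Bohr majorant `w + (1 - w ^ 2) r / (1 - w r) > 1`.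
-/

open Metric MeasureTheory AddCircle ComplexConjugate Filter Topology

theorem summable_norm_mul_pow_of_summable {a : ℕ → ℂ} {s : ℂ} {r : ℝ}
    (hs : Summable fun n => a n * s ^ n) (hr : 0 ≤ r) (hrs : r < ‖s‖) :
    Summable fun n => ‖a n‖ * r ^ n := by
  lift r to NNReal using hr
  set p := FormalMultilinearSeries.ofScalars ℂ a
  have hlim : Tendsto (fun n => ‖p n‖ * (‖s‖₊ : ℝ) ^ n) atTop (𝓝 0) := by
    simpa [p, FormalMultilinearSeries.ofScalars_norm] using hs.tendsto_atTop_zero.norm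
  have hr_lt : (r : ENNReal) < p.radius :=
    (ENNReal.coe_lt_coe.2 (show r < ‖s‖₊ from hrs)).trans_le (p.le_radius_of_tendsto hlim)
  simpa [p, FormalMultilinearSeries.ofScalars_norm] using p.summable_norm_mul_pow hr_lt

section FourierSeries

variable {T : ℝ}

theorem continuous_tsum_mul_fourier {c : ℕ → ℂ} (hc : Summable (‖c ·‖)) :
    Continuous fun x : AddCircle T => ∑' m : ℕ, c m * fourier m x :=
  continuous_tsum (fun m => continuous_const.mul (fourier (T := T) m).continuous) hc
    fun m x => by simp [Circle.norm_coe]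

variable [Fact (0 < T)]

theorem fourierCoeff_zero_eq_integral (f : AddCircle T → ℂ) :
    fourierCoeff f 0 = ∫ x, f x ∂haarAddCircle := by
  simp [fourierCoeff]

theorem fourierCoeff_conj (f : AddCircle T → ℂ) (n : ℤ) :
    fourierCoeff (fun x => conj (f x)) n = conj (fourierCoeff f (-n)) := by
  simp only [fourierCoeff, smul_eq_mul, ← integral_conj, map_mul, neg_neg, fourier_neg]

theorem norm_fourierCoeff_le_integral_norm (f : AddCircle T → ℂ) (n : ℤ) :
    ‖fourierCoeff f n‖ ≤ ∫ x, ‖f x‖ ∂haarAddCircle :=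
  (norm_integral_le_integral_norm _).trans_eq (by simp [Circle.norm_coe])

theorem fourierCoeff_tsum_mul_fourier {c : ℕ → ℂ} (hc : Summable (‖c ·‖)) (n : ℤ) :
    fourierCoeff (fun x : AddCircle T => ∑' m : ℕ, c m * fourier m x) n =
      if 0 ≤ n then c n.natAbs else 0 := by
  set F : ℕ → AddCircle T → ℂ := fun m x => fourier (-n) x • (c m * fourier m x)
  have hF_int : ∀ m, Integrable (F m) haarAddCircle := fun m =>
    (by fun_prop : Continuous (F m)).integrable_of_hasCompactSupport
      (HasCompactSupport.of_compactSpace _)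
  have hF_norm : ∀ m, ∫ x, ‖F m x‖ ∂haarAddCircle = ‖c m‖ := fun m => by
    simp [F, Circle.norm_coe]
  calc fourierCoeff (fun x : AddCircle T => ∑' m : ℕ, c m * fourier m x) n
      = ∫ x, ∑' m, F m x ∂haarAddCircle := by
        simp only [fourierCoeff, F, smul_eq_mul, tsum_mul_left]
    _ = ∑' m : ℕ, c m * fourierCoeff (T := T) (fourier m) n := by
        rw [← integral_tsum_of_summable_integral_norm hF_int
          (by simpa only [hF_norm] using hc)]
        exact tsum_congr fun m => fourierCoeff.const_mul _ (c m) n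
    _ = if 0 ≤ n then c n.natAbs else 0 := by
        simp only [fourierCoeff_fourier, Pi.single_apply]
        split_ifs with hn
        · lift n to ℕ using hn
          simp
        · refine (tsum_congr fun m => ?_).trans tsum_zero
          simp only [mul_ite, mul_one, mul_zero]
          exact if_neg (by omega)

/-- Carathéodory's inequality. -/
theorem norm_fourierCoeff_le_of_re_le_one {g : AddCircle T → ℂ} (hg : Continuous g)
    (hre : ∀ x, (g x).re ≤ 1) {n : ℤ} (hn : n ≠ 0) (hneg : fourierCoeff g (-n) = 0) :
    ‖fourierCoeff g n‖ ≤ 2 * (1 - (fourierCoeff g 0).re) := by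
  have integrable : ∀ {f : AddCircle T → ℂ}, Continuous f → Integrable f haarAddCircle :=
    fun hf => hf.integrable_of_hasCompactSupport (HasCompactSupport.of_compactSpace _)
  set h : AddCircle T → ℂ := fun x => g x + conj (g x) - 2
  have h_coeff : ∀ k, fourierCoeff h k =
      fourierCoeff g k + conj (fourierCoeff g (-k)) - if k = 0 then 2 else 0 := by
    intro k
    have : h = g + (fun x => conj (g x)) + (-2 : ℂ) • ⇑(fourier 0 : C(AddCircle T, ℂ)) := by
      ext x; simp [h, sub_eq_add_neg]
    rw [this, fourierCoeff.add (integrable (by fun_prop)) (integrable (by fun_prop)),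
      fourierCoeff.add (integrable hg) (integrable (by fun_prop)), Pi.add_apply,
      Pi.add_apply, fourierCoeff.const_smul, fourierCoeff_fourier]
    simp [fourierCoeff_conj, Pi.single_apply, sub_eq_add_neg, apply_ite]
  have h_norm : ∀ x, ‖h x‖ = -(h x).re := fun x => by
    have : h x = ((2 * ((g x).re - 1) : ℝ) : ℂ) := by
      simp only [h, Complex.add_conj]; push_cast; ring
    rw [this, Complex.norm_real, Real.norm_of_nonpos (by linarith [hre x]), Complex.ofReal_re]
  calc ‖fourierCoeff g n‖ = ‖fourierCoeff h n‖ := by simp [h_coeff, hneg, hn]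
    _ ≤ ∫ x, ‖h x‖ ∂haarAddCircle := norm_fourierCoeff_le_integral_norm h n
    _ = -(fourierCoeff h 0).re := by
      rw [integral_congr_ae (.of_forall h_norm), integral_neg, fourierCoeff_zero_eq_integral]
      exact congrArg Neg.neg (integral_re (integrable (f := h) (by fun_prop)))
    _ = 2 * (1 - (fourierCoeff g 0).re) := by
      simp only [h_coeff, neg_zero, if_pos, Complex.sub_re, Complex.add_re, Complex.conj_re,
        Complex.re_ofNat]
      ring

theorem norm_fourierCoeff_le_of_norm_le_one {g : AddCircle T → ℂ} (hg : Continuous g)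
    (hnorm : ∀ x, ‖g x‖ ≤ 1) {n : ℤ} (hn : n ≠ 0) (hneg : fourierCoeff g (-n) = 0) :
    ‖fourierCoeff g n‖ ≤ 2 * (1 - ‖fourierCoeff g 0‖) := by
  obtain ⟨u, hu, hu0⟩ := Complex.exists_norm_eq_mul_self (fourierCoeff g 0)
  have hcoeff : ∀ k, fourierCoeff (fun x => u * g x) k = u * fourierCoeff g k :=
    fourierCoeff.const_mul g u
  have := norm_fourierCoeff_le_of_re_le_one (g := fun x => u * g x) (by fun_prop)
    (fun x => (Complex.re_le_norm _).trans (by simpa [hu] using hnorm x)) hn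
    (by rw [hcoeff, hneg, mul_zero])
  simpa [hcoeff, hu, ← hu0] using this

end FourierSeries

section BoundedPowerSeries

variable {f : ℂ → ℂ} {a : ℕ → ℂ}

theorem summable_norm_mul_pow_of_hasSum_ball
    (hf : ∀ z ∈ ball (0 : ℂ) 1, HasSum (fun n => a n * z ^ n) (f z)) {r : ℝ} (hr : 0 ≤ r)
    (hr1 : r < 1) : Summable fun n => ‖a n‖ * r ^ n := by
  have hs : ‖(((1 + r) / 2 : ℝ) : ℂ)‖ = (1 + r) / 2 := by
    rw [Complex.norm_real, Real.norm_of_nonneg (by linarith)]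
  exact summable_norm_mul_pow_of_summable
    (hf _ (mem_ball_zero_iff.2 (by rw [hs]; linarith))).summable hr (by rw [hs]; linarith)

theorem norm_coeff_mul_pow_le_of_norm_le_one
    (hf : ∀ z ∈ ball (0 : ℂ) 1, HasSum (fun n => a n * z ^ n) (f z))
    (hb : ∀ z ∈ ball (0 : ℂ) 1, ‖f z‖ ≤ 1) {r : ℝ} (hr : 0 ≤ r) (hr1 : r < 1) {n : ℕ}
    (hn : n ≠ 0) : ‖a n‖ * r ^ n ≤ 2 * (1 - ‖a 0‖) := by
  set c : ℕ → ℂ := fun m => a m * (r : ℂ) ^ m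
  have hc_norm : ∀ m, ‖c m‖ = ‖a m‖ * r ^ m := fun m => by
    simp [c, Real.norm_of_nonneg hr]
  have hc : Summable (‖c ·‖) := by
    simpa only [hc_norm] using summable_norm_mul_pow_of_hasSum_ball hf hr hr1
  have hg : ∀ x : AddCircle 1, ∑' m, c m * fourier m x = f (r * toCircle x) := fun x => by
    rw [← (hf _ (by simp [Circle.norm_coe, abs_of_nonneg hr, hr1])).tsum_eq]
    exact tsum_congr fun m => by simp [c, toCircle_nsmul, mul_pow, mul_assoc]
  have := norm_fourierCoeff_le_of_norm_le_one (T := 1) (continuous_tsum_mul_fourier hc)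
    (fun x => hg x ▸ hb _ (by simp [Circle.norm_coe, abs_of_nonneg hr, hr1]))
    (n := n) (by exact_mod_cast hn) (by rw [fourierCoeff_tsum_mul_fourier hc]; simp [hn])
  rw [fourierCoeff_tsum_mul_fourier hc, fourierCoeff_tsum_mul_fourier hc] at this
  simpa [c, abs_of_nonneg hr] using this

theorem norm_coeff_le_of_norm_le_one
    (hf : ∀ z ∈ ball (0 : ℂ) 1, HasSum (fun n => a n * z ^ n) (f z))
    (hb : ∀ z ∈ ball (0 : ℂ) 1, ‖f z‖ ≤ 1) {n : ℕ} (hn : n ≠ 0) :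
    ‖a n‖ ≤ 2 * (1 - ‖a 0‖) := by
  have hlim : Tendsto (fun r : ℝ => ‖a n‖ * r ^ n) (𝓝[<] 1) (𝓝 (‖a n‖)) := by
    have : Continuous fun r : ℝ => ‖a n‖ * r ^ n := by fun_prop
    simpa using (this.tendsto 1).mono_left nhdsWithin_le_nhds
  refine le_of_tendsto hlim ?_
  filter_upwards [Ioo_mem_nhdsLT zero_lt_one] with r hr
  exact norm_coeff_mul_pow_le_of_norm_le_one hf hb hr.1.le hr.2 hn

end BoundedPowerSeries

theorem tsum_norm_mul_pow_le_one {a : ℕ → ℂ} (ha : ∀ n ≠ 0, ‖a n‖ ≤ 2 * (1 - ‖a 0‖)) {r : ℝ}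
    (hr : 0 ≤ r) (hr3 : r ≤ 1 / 3) : ∑' n, ‖a n‖ * r ^ n ≤ 1 := by
  set A := ‖a 0‖
  have hA : 0 ≤ 1 - A := by linarith [norm_nonneg (a 1), ha 1 one_ne_zero]
  have hr1 : r < 1 := by linarith
  have htail_le : ∀ m, ‖a (m + 1)‖ * r ^ (m + 1) ≤ 2 * (1 - A) * r * r ^ m := fun m =>
    (mul_le_mul_of_nonneg_right (ha _ m.succ_ne_zero) (by positivity)).trans_eq (by ring)
  have hgeom : HasSum (fun m : ℕ => 2 * (1 - A) * r * r ^ m) (2 * (1 - A) * r * (1 - r)⁻¹) :=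
    (hasSum_geometric_of_lt_one hr hr1).mul_left _
  have htail : Summable fun m => ‖a (m + 1)‖ * r ^ (m + 1) :=
    hgeom.summable.of_nonneg_of_le (fun m => by positivity) htail_le
  have hsum : Summable fun n => ‖a n‖ * r ^ n := (summable_nat_add_iff 1).1 htail
  calc ∑' n, ‖a n‖ * r ^ n = A + ∑' m, ‖a (m + 1)‖ * r ^ (m + 1) := by
        simp [hsum.tsum_eq_zero_add, A]
    _ ≤ A + 2 * (1 - A) * r * (1 - r)⁻¹ := by
        gcongr; exact hgeom.tsum_eq ▸ htail.tsum_le_tsum htail_le hgeom.summable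
    _ ≤ 1 := by
        have : 2 * r * (1 - r)⁻¹ ≤ 1 := by
          rw [mul_inv_le_iff₀ (by linarith)]; linarith
        nlinarith

section Mobius

noncomputable def mobius (w z : ℂ) : ℂ := (w - z) / (1 - conj w * z)

noncomputable def mobiusCoeff (w : ℂ) : ℕ → ℂ
  | 0 => w
  | m + 1 => -(1 - ‖w‖ ^ 2 : ℝ) * conj w ^ m

variable {w z : ℂ}

theorem one_sub_conj_mul_ne_zero (hw : ‖w‖ < 1) (hz : ‖z‖ < 1) : 1 - conj w * z ≠ 0 := by
  refine sub_ne_zero.2 (ne_of_apply_ne norm (ne_of_gt ?_))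
  simpa using mul_lt_one_of_nonneg_of_lt_one_left (norm_nonneg w) hw hz.le

theorem norm_mobius_lt_one (hw : ‖w‖ < 1) (hz : ‖z‖ < 1) : ‖mobius w z‖ < 1 := by
  have hne := one_sub_conj_mul_ne_zero hw hz
  rw [mobius, norm_div, div_lt_one (norm_pos_iff.2 hne),
    ← sq_lt_sq₀ (norm_nonneg _) (norm_nonneg _)]
  have key : ‖1 - conj w * z‖ ^ 2 - ‖w - z‖ ^ 2 = (1 - ‖w‖ ^ 2) * (1 - ‖z‖ ^ 2) := by
    simp only [Complex.sq_norm, Complex.normSq_apply, Complex.sub_re, Complex.sub_im,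
      Complex.mul_re, Complex.mul_im, Complex.conj_re, Complex.conj_im, Complex.one_re,
      Complex.one_im]
    ring
  have : 0 < (1 - ‖w‖ ^ 2) * (1 - ‖z‖ ^ 2) := by
    apply mul_pos <;> nlinarith [norm_nonneg w, norm_nonneg z]
  linarith

theorem hasSum_mobiusCoeff_mul_pow (hw : ‖w‖ < 1) (hz : ‖z‖ < 1) :
    HasSum (fun n => mobiusCoeff w n * z ^ n) (mobius w z) := by
  have hne := one_sub_conj_mul_ne_zero hw hz
  have hwz : ‖conj w * z‖ < 1 := by
    simpa using mul_lt_one_of_nonneg_of_lt_one_left (norm_nonneg w) hw hz.le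
  have htail := ((hasSum_geometric_of_norm_lt_one hwz).mul_left
    (-(1 - ‖w‖ ^ 2 : ℝ) * z)).congr_fun (g := fun m => mobiusCoeff w (m + 1) * z ^ (m + 1))
    fun m => by simp only [mobiusCoeff]; ring
  have h := (hasSum_nat_add_iff (f := fun n => mobiusCoeff w n * z ^ n) 1).1 htail
  convert h using 1
  · rfl
  rw [Finset.sum_range_one, mobius, ← div_eq_mul_inv, div_add' _ _ _ hne]
  congr 1
  simp only [mobiusCoeff, pow_zero, mul_one, Complex.ofReal_sub, Complex.ofReal_one,
    Complex.ofReal_pow, ← Complex.mul_conj']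
  ring

theorem hasSum_norm_mobiusCoeff_mul_pow (hw : ‖w‖ < 1) {r : ℝ} (hr : 0 ≤ r) (hr1 : r < 1) :
    HasSum (fun n => ‖mobiusCoeff w n‖ * r ^ n)
      (‖w‖ + (1 - ‖w‖ ^ 2) * r / (1 - ‖w‖ * r)) := by
  have hwr : ‖w‖ * r < 1 := mul_lt_one_of_nonneg_of_lt_one_left (norm_nonneg w) hw hr1.le
  have hw2 : 0 ≤ 1 - ‖w‖ ^ 2 := by nlinarith [norm_nonneg w]
  have htail := ((hasSum_geometric_of_lt_one (by positivity) hwr).mul_left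
    ((1 - ‖w‖ ^ 2) * r)).congr_fun (g := fun m => ‖mobiusCoeff w (m + 1)‖ * r ^ (m + 1))
    fun m => by
      simp only [mobiusCoeff, norm_mul, norm_neg, Complex.norm_real, Real.norm_of_nonneg hw2,
        norm_pow, Complex.norm_conj]
      ring
  have h := (hasSum_nat_add_iff (f := fun n => ‖mobiusCoeff w n‖ * r ^ n) 1).1 htail
  convert h using 1
  · rfl
  simp only [Finset.sum_range_one, mobiusCoeff, pow_zero, mul_one]
  ring

end Mobius

theorem exists_one_lt_tsum_norm_mobiusCoeff_mul_pow {r : ℝ} (hr3 : 1 / 3 < r) (hr1 : r < 1) :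
    ∃ w : ℂ, ‖w‖ < 1 ∧ 1 < ∑' n, ‖mobiusCoeff w n‖ * r ^ n := by
  have hr0 : 0 < r := by linarith
  -- the midpoint of `((1 - r) / (2 * r), 1)`, the range of `α` for which the majorant exceeds `1`
  set α := (1 + r) / (4 * r) with hα
  have hα0 : 0 < α := by positivity
  have hα1 : α < 1 := by rw [hα, div_lt_one (by positivity)]; linarith
  have hw : ‖(α : ℂ)‖ = α := by rw [Complex.norm_real, Real.norm_of_nonneg hα0.le]
  have hw1 : ‖(α : ℂ)‖ < 1 := by rwa [hw]
  refine ⟨α, hw1, ?_⟩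
  rw [(hasSum_norm_mobiusCoeff_mul_pow hw1 hr0.le hr1).tsum_eq, hw]
  have hαr : 0 < 1 - α * r := by nlinarith
  have : 1 < r * (1 + 2 * α) := by rw [hα]; field_simp; linarith
  rw [← sub_pos, show α + (1 - α ^ 2) * r / (1 - α * r) - 1 =
    (1 - α) * (r * (1 + 2 * α) - 1) / (1 - α * r) by field_simp [hαr.ne']; ring]
  exact div_pos (mul_pos (by linarith) (by linarith)) hαr

/-- Bohr's theorem: if `f = ∑ a_n z^n` is analytic on the unit disk with `|f| < 1`,
then `∑ |a_n| r^n ≤ 1` for every `r ≤ 1/3`; moreover `1/3` is the largest such radius. -/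
theorem bohr_theorem :
    (∀ (f : ℂ → ℂ) (a : ℕ → ℂ),
      (∀ z ∈ ball (0 : ℂ) 1, HasSum (fun n => a n * z ^ n) (f z)) →
      (∀ z ∈ ball (0 : ℂ) 1, ‖f z‖ < 1) →
      ∀ r : ℝ, 0 ≤ r → r ≤ 1 / 3 → (∑' n, ‖a n‖ * r ^ n) ≤ 1) ∧
    (∀ ρ : ℝ, 1 / 3 < ρ →
      ∃ (f : ℂ → ℂ) (a : ℕ → ℂ) (r : ℝ),
        (∀ z ∈ ball (0 : ℂ) 1, HasSum (fun n => a n * z ^ n) (f z)) ∧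
        (∀ z ∈ ball (0 : ℂ) 1, ‖f z‖ < 1) ∧
        0 ≤ r ∧ r ≤ ρ ∧ 1 < (∑' n, ‖a n‖ * r ^ n)) := by
  refine ⟨fun f a hf hb r hr hr3 => ?_, fun ρ hρ => ?_⟩
  · exact tsum_norm_mul_pow_le_one
      (fun n hn => norm_coeff_le_of_norm_le_one hf (fun z hz => (hb z hz).le) (n := n) hn)
      hr hr3
  · set r := min ρ (1 / 2)
    have hr3 : 1 / 3 < r := lt_min hρ (by norm_num)
    obtain ⟨w, hw, hlt⟩ :=
      exists_one_lt_tsum_norm_mobiusCoeff_mul_pow hr3 ((min_le_right _ _).trans_lt (by norm_num))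
    exact ⟨mobius w, mobiusCoeff w, r,
      fun z hz => hasSum_mobiusCoeff_mul_pow hw (mem_ball_zero_iff.1 hz),
      fun z hz => norm_mobius_lt_one hw (mem_ball_zero_iff.1 hz),
      by linarith, min_le_left _ _, hlt⟩
end

section
/- The Taylor coefficients of -J(-z) are all positive; that is, writing -J(-z) = 16 Σ_{n≥0} A_n z^{n+1}, every A_n > 0. -/
open Metric

/-- The elliptic modular function as an infinite product. -/
noncomputable def modularJ (z : ℂ) : ℂ :=
  16 * z * ∏' n : ℕ, ((1 + z ^ (2 * (n + 1))) / (1 + z ^ (2 * (n + 1) - 1))) ^ 8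

/-!
Replacing `z` by `-z` gives `-J(-z) = 16 z ∏_{k ≥ 0} ((1 + z^(2k+2)) / (1 - z^(2k+1)))^8`.
Each factor `(1 + z^(2k+2)) ∑_j z^((2k+1)j)` has nonnegative coefficients and is
`1 + O(z^(2k+1))`, so the coefficient of `z^n` in the partial products is nondecreasing and
becomes constant once `2m ≥ n`; it is at least the coefficient of `z^n` in
`((1 + z^2)/(1 - z))^8`, which is `≥ 1`. Nonnegativity also makes all Cauchy products absolutely
convergent on the unit disk, and evaluating the partial products at `t ∈ [0, 1)` bounds the
partial sums of `∑ A_n t^n` by `exp (16 / (1 - t)^2)`. Dominated convergence then identifies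
`∑ A_n z^n` with the limit of the partial products, i.e. with the infinite product.
-/

open PowerSeries Finset Filter Topology

lemma Complex.norm_ofReal_mul_pow {c : ℝ} (hc : 0 ≤ c) (z : ℂ) (n : ℕ) :
    ‖(c : ℂ) * z ^ n‖ = c * ‖z‖ ^ n := by
  rw [norm_mul, norm_pow, Complex.norm_real, Real.norm_of_nonneg hc]

namespace PowerSeries

def nonnegCoeffs : Subsemiring ℝ⟦X⟧ where
  carrier := {φ | ∀ n, 0 ≤ coeff n φ}
  zero_mem' n := by simp
  one_mem' n := by rw [coeff_one]; split_ifs <;> norm_num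
  add_mem' hφ hψ n := by rw [map_add]; exact add_nonneg (hφ n) (hψ n)
  mul_mem' hφ hψ n := by
    rw [coeff_mul]; exact sum_nonneg fun p _ => mul_nonneg (hφ p.1) (hψ p.2)

lemma X_mem_nonnegCoeffs : X ∈ nonnegCoeffs := fun n => by
  rw [coeff_X]; split_ifs <;> norm_num

lemma one_add_X_pow_mem_nonnegCoeffs (d : ℕ) : 1 + X ^ d ∈ nonnegCoeffs :=
  add_mem (one_mem _) (pow_mem X_mem_nonnegCoeffs d)

lemma coeff_le_coeff_mul {φ ψ : ℝ⟦X⟧} (hφ : φ ∈ nonnegCoeffs) (hψ : ψ ∈ nonnegCoeffs)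
    (hψ₀ : constantCoeff ψ = 1) (n : ℕ) : coeff n φ ≤ coeff n (φ * ψ) := by
  calc coeff n φ = coeff n φ * coeff 0 ψ := by
        rw [coeff_zero_eq_constantCoeff_apply, hψ₀, mul_one]
    _ ≤ coeff n (φ * ψ) := by
      rw [coeff_mul]
      exact single_le_sum (f := fun p : ℕ × ℕ => coeff p.1 φ * coeff p.2 ψ)
        (fun p _ => mul_nonneg (hφ p.1) (hψ p.2))
        (mem_antidiagonal.2 (add_zero n) : (n, 0) ∈ _)

/-- `1 / (1 - X ^ d)`, for `d ≠ 0`. -/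
def geomX (d : ℕ) : ℝ⟦X⟧ := mk fun n => if d ∣ n then 1 else 0

lemma geomX_mem_nonnegCoeffs (d : ℕ) : geomX d ∈ nonnegCoeffs := fun n => by
  simp only [geomX, coeff_mk]; split_ifs <;> norm_num

@[simp] lemma constantCoeff_geomX (d : ℕ) : constantCoeff (geomX d) = 1 := by
  simp [geomX, ← coeff_zero_eq_constantCoeff_apply]

lemma geomX_eq_one_add {d : ℕ} (hd : d ≠ 0) : geomX d = 1 + X ^ d * geomX d := by
  ext n
  rw [map_add, coeff_X_pow_mul', coeff_one]
  simp only [geomX, coeff_mk]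
  rcases eq_or_ne n 0 with rfl | hn
  · simp [hd]
  · rcases le_or_gt d n with h | h
    · obtain ⟨m, rfl⟩ := Nat.exists_eq_add_of_le h
      simp [hd]
    · simp [hn, h.not_ge, Nat.not_dvd_of_pos_of_lt (Nat.pos_of_ne_zero hn) h]

def HasSumOnBall (φ : ℝ⟦X⟧) (R : ℝ) (F : ℂ → ℂ) : Prop :=
  ∀ z ∈ ball (0 : ℂ) R, HasSum (fun n => ((coeff n φ : ℝ) : ℂ) * z ^ n) (F z)

lemma hasSumOnBall_one (R : ℝ) : HasSumOnBall 1 R 1 := fun z _ =>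
  (hasSum_ite_eq 0 (1 : ℂ)).congr_fun fun n => by rw [coeff_one]; split_ifs <;> simp_all

lemma hasSumOnBall_one_add_X_pow (R : ℝ) (d : ℕ) :
    HasSumOnBall (1 + X ^ d) R fun z => 1 + z ^ d := fun z _ =>
  ((hasSum_ite_eq 0 (1 : ℂ)).add (hasSum_ite_eq d (z ^ d))).congr_fun fun n => by
    simp only [map_add, coeff_one, coeff_X_pow]
    split_ifs <;> simp_all

lemma hasSumOnBall_geomX {d : ℕ} (hd : d ≠ 0) :
    HasSumOnBall (geomX d) 1 fun z => (1 - z ^ d)⁻¹ := by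
  intro z hz
  have hzd : ‖z ^ d‖ < 1 := by
    rw [norm_pow]; exact pow_lt_one₀ (norm_nonneg z) (mem_ball_zero_iff.1 hz) hd
  refine ((mul_right_injective₀ hd).hasSum_iff fun n hn => ?_).1 ?_
  · simp only [geomX, coeff_mk]
    rw [if_neg fun ⟨k, hk⟩ => hn ⟨k, hk.symm⟩, Complex.ofReal_zero, zero_mul]
  · refine (hasSum_geometric_of_norm_lt_one hzd).congr_fun fun k => ?_
    simp [geomX, pow_mul]

namespace HasSumOnBall

variable {φ ψ : ℝ⟦X⟧} {R : ℝ} {F G : ℂ → ℂ}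

lemma hasSum_re (h : HasSumOnBall φ R F) {t : ℝ} (ht : |t| < R) :
    HasSum (fun n => coeff n φ * t ^ n) (F t).re := by
  simpa [← Complex.ofReal_pow] using Complex.hasSum_re (h t (by simpa using ht))

/-- With nonnegative coefficients, convergence at `‖z‖` gives absolute convergence at `z`. -/
lemma summable_norm (h : HasSumOnBall φ R F) (hφ : φ ∈ nonnegCoeffs) {z : ℂ}
    (hz : z ∈ ball 0 R) : Summable fun n => ‖((coeff n φ : ℝ) : ℂ) * z ^ n‖ := by
  refine (h.hasSum_re (t := ‖z‖) (by simpa using hz)).summable.congr fun n => ?_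
  rw [Complex.norm_ofReal_mul_pow (hφ n)]

lemma mul (hF : HasSumOnBall φ R F) (hG : HasSumOnBall ψ R G) (hφ : φ ∈ nonnegCoeffs)
    (hψ : ψ ∈ nonnegCoeffs) : HasSumOnBall (φ * ψ) R (F * G) := by
  intro z hz
  have hφz := hF.summable_norm hφ hz
  have hψz := hG.summable_norm hψ hz
  have hprod := (summable_norm_sum_mul_antidiagonal_of_summable_norm hφz hψz).of_norm.hasSum
  rw [← tsum_mul_tsum_eq_tsum_sum_antidiagonal_of_summable_norm hφz hψz, (hF z hz).tsum_eq,
    (hG z hz).tsum_eq] at hprod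
  refine hprod.congr_fun fun n => ?_
  rw [coeff_mul, Complex.ofReal_sum, sum_mul]
  refine sum_congr rfl fun p hp => ?_
  rw [← mem_antidiagonal.1 hp, pow_add]
  push_cast
  ring

lemma prod {ι : Type*} (s : Finset ι) {φ : ι → ℝ⟦X⟧} {F : ι → ℂ → ℂ}
    (h : ∀ i ∈ s, HasSumOnBall (φ i) R (F i)) (hφ : ∀ i ∈ s, φ i ∈ nonnegCoeffs) :
    HasSumOnBall (∏ i ∈ s, φ i) R (∏ i ∈ s, F i) := by
  induction s using Finset.cons_induction with
  | empty => simpa using hasSumOnBall_one R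
  | cons i s hi ih =>
    rw [forall_mem_cons] at h hφ
    rw [prod_cons, prod_cons]
    exact h.1.mul (ih h.2 hφ.2) hφ.1 (prod_mem hφ.2)

lemma pow (h : HasSumOnBall φ R F) (hφ : φ ∈ nonnegCoeffs) (n : ℕ) :
    HasSumOnBall (φ ^ n) R (F ^ n) := by
  simpa using HasSumOnBall.prod (range n) (fun _ _ => h) (fun _ _ => hφ)

end HasSumOnBall

end PowerSeries

namespace ModularJ

noncomputable def factor (k : ℕ) (z : ℂ) : ℂ := (1 + z ^ (2 * k + 2)) / (1 - z ^ (2 * k + 1))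

lemma neg_modularJ_neg (z : ℂ) : -modularJ (-z) = 16 * z * ∏' k, factor k z ^ 8 := by
  have hfactor (n : ℕ) : ((1 + (-z) ^ (2 * (n + 1))) / (1 + (-z) ^ (2 * (n + 1) - 1))) ^ 8
      = factor n z ^ 8 := by
    rw [show 2 * (n + 1) - 1 = 2 * n + 1 by omega, mul_add_one, Even.neg_pow ⟨n + 1, by ring⟩,
      Odd.neg_pow ⟨n, rfl⟩, ← sub_eq_add_neg, factor]
  rw [modularJ, tprod_congr hfactor]
  ring

noncomputable def factorSeries (k : ℕ) : ℝ⟦X⟧ := (1 + X ^ (2 * k + 2)) * geomX (2 * k + 1)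

noncomputable def partialProd (m : ℕ) : ℝ⟦X⟧ := ∏ k ∈ range m, factorSeries k ^ 8

/-- `partialProd m` already carries the final coefficients in all degrees `≤ 2 m`. -/
noncomputable def coeffJ (n : ℕ) : ℝ := coeff n (partialProd (n + 1))

lemma factorSeries_mem_nonnegCoeffs (k : ℕ) : factorSeries k ∈ nonnegCoeffs :=
  mul_mem (one_add_X_pow_mem_nonnegCoeffs _) (geomX_mem_nonnegCoeffs _)

lemma partialProd_mem_nonnegCoeffs (m : ℕ) : partialProd m ∈ nonnegCoeffs :=
  prod_mem fun k _ => pow_mem (factorSeries_mem_nonnegCoeffs k) 8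

@[simp] lemma constantCoeff_factorSeries (k : ℕ) : constantCoeff (factorSeries k) = 1 := by
  simp [factorSeries]

lemma X_pow_dvd_factorSeries_sub_one (k : ℕ) : X ^ (2 * k + 1) ∣ factorSeries k - 1 := by
  refine ⟨(1 + X) * geomX (2 * k + 1), ?_⟩
  rw [factorSeries]
  linear_combination geomX_eq_one_add (by omega : 2 * k + 1 ≠ 0)

lemma X_pow_dvd_partialProd_sub {m m' : ℕ} (h : m ≤ m') :
    X ^ (2 * m + 1) ∣ partialProd m' - partialProd m := by
  induction m', h using Nat.le_induction with
  | base => simp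
  | succ m' hm ih =>
    have hstep : X ^ (2 * m + 1) ∣ factorSeries m' ^ 8 - 1 :=
      (pow_dvd_pow X (by omega)).trans
        ((X_pow_dvd_factorSeries_sub_one m').trans (sub_one_dvd_pow_sub_one _ 8))
    have hsplit : partialProd (m' + 1) - partialProd m
        = partialProd m' - partialProd m + partialProd m' * (factorSeries m' ^ 8 - 1) := by
      rw [partialProd, prod_range_succ, ← partialProd]; ring
    rw [hsplit]
    exact dvd_add ih (dvd_mul_of_dvd_right hstep _)

lemma coeff_partialProd_of_le {m m' j : ℕ} (h : m ≤ m') (hj : j ≤ 2 * m) :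
    coeff j (partialProd m') = coeff j (partialProd m) := by
  rw [← sub_eq_zero, ← map_sub]
  exact X_pow_dvd_iff.1 (X_pow_dvd_partialProd_sub h) j (by omega)

lemma coeff_partialProd_eq_coeffJ {m j : ℕ} (hj : j < m) : coeff j (partialProd m) = coeffJ j :=
  coeff_partialProd_of_le hj (by omega)

lemma monotone_coeff_partialProd (j : ℕ) : Monotone fun m => coeff j (partialProd m) := by
  refine monotone_nat_of_le_succ fun m => ?_
  rw [partialProd, partialProd, prod_range_succ]
  exact coeff_le_coeff_mul (partialProd_mem_nonnegCoeffs m)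
    (pow_mem (factorSeries_mem_nonnegCoeffs m) 8) (by simp) j

lemma coeff_partialProd_le_coeffJ (m j : ℕ) : coeff j (partialProd m) ≤ coeffJ j :=
  (monotone_coeff_partialProd j (le_max_left m (j + 1))).trans
    (coeff_partialProd_eq_coeffJ (by omega)).le

lemma one_le_coeff_factorSeries_zero (n : ℕ) : 1 ≤ coeff n (factorSeries 0) := by
  have h := coeff_le_coeff_mul (geomX_mem_nonnegCoeffs 1) (one_add_X_pow_mem_nonnegCoeffs 2)
    (by simp) n
  simpa [factorSeries, geomX, mul_comm] using h

lemma one_le_coeffJ (n : ℕ) : 1 ≤ coeffJ n := by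
  have h0 := factorSeries_mem_nonnegCoeffs 0
  have hpow : 1 ≤ coeff n (factorSeries 0 ^ 8) := by
    rw [pow_succ']
    exact (one_le_coeff_factorSeries_zero n).trans
      (coeff_le_coeff_mul h0 (pow_mem h0 7) (by simp) n)
  rw [coeffJ, partialProd, prod_range_succ', mul_comm]
  exact hpow.trans (coeff_le_coeff_mul (pow_mem h0 8)
    (prod_mem fun k _ => pow_mem (factorSeries_mem_nonnegCoeffs (k + 1)) 8) (by simp) n)

lemma coeffJ_pos (n : ℕ) : 0 < coeffJ n := one_pos.trans_le (one_le_coeffJ n)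

lemma hasSumOnBall_factorSeries (k : ℕ) : HasSumOnBall (factorSeries k) 1 (factor k) := by
  have h := (hasSumOnBall_one_add_X_pow 1 (2 * k + 2)).mul
    (hasSumOnBall_geomX (Nat.succ_ne_zero (2 * k)))
    (one_add_X_pow_mem_nonnegCoeffs _) (geomX_mem_nonnegCoeffs _)
  intro z hz
  simpa [factorSeries, factor, div_eq_mul_inv] using h z hz

lemma hasSumOnBall_partialProd (m : ℕ) :
    HasSumOnBall (partialProd m) 1 fun z => ∏ k ∈ range m, factor k z ^ 8 := by
  have h := HasSumOnBall.prod (range m) (fun k _ => (hasSumOnBall_factorSeries k).pow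
    (factorSeries_mem_nonnegCoeffs k) 8) (fun k _ => pow_mem (factorSeries_mem_nonnegCoeffs k) 8)
  intro z hz
  simpa [partialProd] using h z hz

lemma norm_factor_sub_one_le {z : ℂ} (hz : ‖z‖ < 1) (k : ℕ) :
    ‖factor k z - 1‖ ≤ 2 * ‖z‖ ^ k / (1 - ‖z‖) := by
  have hr0 := norm_nonneg z
  have hodd : ‖z ^ (2 * k + 1)‖ ≤ ‖z‖ ^ k := by
    rw [norm_pow]; exact pow_le_pow_of_le_one hr0 hz.le (by omega)
  have heven : ‖z ^ (2 * k + 2)‖ ≤ ‖z‖ ^ k := by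
    rw [norm_pow]; exact pow_le_pow_of_le_one hr0 hz.le (by omega)
  have hden : 1 - ‖z‖ ≤ ‖1 - z ^ (2 * k + 1)‖ := by
    have h1 : ‖z ^ (2 * k + 1)‖ ≤ ‖z‖ := by
      rw [norm_pow]; exact pow_le_of_le_one hr0 hz.le (by omega)
    have h2 := norm_sub_norm_le (1 : ℂ) (z ^ (2 * k + 1))
    rw [norm_one] at h2
    linarith
  have hden0 : 1 - z ^ (2 * k + 1) ≠ 0 := norm_pos_iff.1 (lt_of_lt_of_le (by linarith) hden)
  have heq : factor k z - 1 = (z ^ (2 * k + 2) + z ^ (2 * k + 1)) / (1 - z ^ (2 * k + 1)) := by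
    rw [factor]; field_simp; ring
  rw [heq, norm_div]
  gcongr
  exact (norm_add_le _ _).trans (by linarith)

lemma multipliable_factor_pow {z : ℂ} (hz : ‖z‖ < 1) : Multipliable fun k => factor k z ^ 8 := by
  have hsum : Summable fun k => ‖factor k z - 1‖ :=
    Summable.of_nonneg_of_le (fun _ => norm_nonneg _) (norm_factor_sub_one_le hz)
      (by simpa [mul_div_right_comm] using
        (summable_geometric_of_lt_one (norm_nonneg z) hz).mul_left (2 / (1 - ‖z‖)))
  simpa using (multipliable_one_add_of_summable hsum).pow 8

lemma norm_prod_factor_pow_le {z : ℂ} (hz : ‖z‖ < 1) (m : ℕ) :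
    ‖∏ k ∈ range m, factor k z ^ 8‖ ≤ Real.exp (16 / (1 - ‖z‖) ^ 2) := by
  set r := ‖z‖
  have hsum : ∑ k ∈ range m, 2 * r ^ k / (1 - r) ≤ 2 / (1 - r) ^ 2 := by
    rw [← sum_div, ← mul_sum, ← Nat.Ico_zero_eq_range]
    calc (2 * ∑ k ∈ Ico 0 m, r ^ k) / (1 - r) ≤ 2 * (r ^ 0 / (1 - r)) / (1 - r) := by
          gcongr; exact geom_sum_Ico_le_of_lt_one (norm_nonneg z) hz
      _ = 2 / (1 - r) ^ 2 := by field_simp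
  calc ‖∏ k ∈ range m, factor k z ^ 8‖ = (∏ k ∈ range m, ‖factor k z‖) ^ 8 := by
        simp [norm_prod, prod_pow]
    _ ≤ (∏ k ∈ range m, (1 + 2 * r ^ k / (1 - r))) ^ 8 := by
        gcongr with k
        refine (norm_le_norm_add_norm_sub' _ 1).trans ?_
        rw [norm_one]
        gcongr
        exact norm_factor_sub_one_le hz k
    _ ≤ Real.exp (∑ k ∈ range m, 2 * r ^ k / (1 - r)) ^ 8 := by
        gcongr
        exact Real.prod_one_add_le_exp_sum _ fun k => by positivity
    _ ≤ Real.exp (2 / (1 - r) ^ 2) ^ 8 := by gcongr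
    _ = Real.exp (16 / (1 - r) ^ 2) := by rw [← Real.exp_nat_mul]; ring_nf

lemma summable_coeffJ_mul_pow {t : ℝ} (ht0 : 0 ≤ t) (ht1 : t < 1) :
    Summable fun n => coeffJ n * t ^ n := by
  have hnorm : ‖(t : ℂ)‖ = t := by rw [Complex.norm_real, Real.norm_of_nonneg ht0]
  refine summable_of_sum_range_le (c := Real.exp (16 / (1 - t) ^ 2))
    (fun n => mul_nonneg (coeffJ_pos n).le (pow_nonneg ht0 n)) fun N => ?_
  have hN := (hasSumOnBall_partialProd N).hasSum_re (t := t) (by rwa [abs_of_nonneg ht0])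
  calc ∑ n ∈ range N, coeffJ n * t ^ n = ∑ n ∈ range N, coeff n (partialProd N) * t ^ n :=
        sum_congr rfl fun n hn => by rw [coeff_partialProd_eq_coeffJ (mem_range.1 hn)]
    _ ≤ (∏ k ∈ range N, factor k t ^ 8).re := sum_le_hasSum _
        (fun n _ => mul_nonneg (partialProd_mem_nonnegCoeffs N n) (pow_nonneg ht0 n)) hN
    _ ≤ ‖∏ k ∈ range N, factor k t ^ 8‖ := Complex.re_le_norm _
    _ ≤ Real.exp (16 / (1 - t) ^ 2) := by
        simpa only [hnorm] using norm_prod_factor_pow_le (z := t) (by rwa [hnorm]) N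

lemma hasSum_coeffJ {z : ℂ} (hz : ‖z‖ < 1) :
    HasSum (fun n => (coeffJ n : ℂ) * z ^ n) (∏' k, factor k z ^ 8) := by
  have hbound := summable_coeffJ_mul_pow (norm_nonneg z) hz
  have hsummable : Summable fun n => (coeffJ n : ℂ) * z ^ n :=
    Summable.of_norm (hbound.congr fun n => by rw [Complex.norm_ofReal_mul_pow (coeffJ_pos n).le])
  have hlim : Tendsto (fun m => ∏ k ∈ range m, factor k z ^ 8) atTop
      (𝓝 (∑' n, (coeffJ n : ℂ) * z ^ n)) := by
    have hpartial (m : ℕ) : ∏ k ∈ range m, factor k z ^ 8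
        = ∑' n, ((coeff n (partialProd m) : ℝ) : ℂ) * z ^ n :=
      ((hasSumOnBall_partialProd m) z (mem_ball_zero_iff.2 hz)).tsum_eq.symm
    simp_rw [hpartial]
    refine tendsto_tsum_of_dominated_convergence hbound (fun n => ?_)
      (Eventually.of_forall fun m n => ?_)
    · refine tendsto_const_nhds.congr' (eventually_atTop.2 ⟨n + 1, fun m hm => ?_⟩)
      simp only [coeff_partialProd_eq_coeffJ (Nat.lt_of_succ_le hm)]
    · rw [Complex.norm_ofReal_mul_pow (partialProd_mem_nonnegCoeffs m n)]
      gcongr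
      exact coeff_partialProd_le_coeffJ m n
  rw [tendsto_nhds_unique (multipliable_factor_pow hz).hasProd.tendsto_prod_nat hlim]
  exact hsummable.hasSum

end ModularJ

/-- The Taylor coefficients of `-J(-z)` are all positive: there are reals `A_n > 0`
with `-J(-z) = 16 ∑_{n≥0} A_n z^{n+1}` on the unit disk. -/
theorem modularJ_neg_coeffs_pos :
    ∃ A : ℕ → ℝ, (∀ n, 0 < A n) ∧
      ∀ z ∈ ball (0 : ℂ) 1,
        HasSum (fun n => 16 * (A n : ℂ) * z ^ (n + 1)) (-modularJ (-z)) := by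
  refine ⟨ModularJ.coeffJ, ModularJ.coeffJ_pos, fun z hz => ?_⟩
  rw [ModularJ.neg_modularJ_neg]
  exact ((ModularJ.hasSum_coeffJ (mem_ball_zero_iff.1 hz)).mul_left (16 * z)).congr_fun
    fun n => by ring
end

section
/- For each 0 < r < 1, the maximum of |J(z)| on the circle |z| = r equals |J(-r)| = -J(-r), i.e. the maximum modulus of the modular function on circles is attained on the negative real axis. -/
open Metric

/-!
For `|z| = r < 1` every factor of the product is dominated by the corresponding factor at `-r`:
`|1 + z^(2n)| ≤ 1 + r^(2n)` and `|1 + z^(2n-1)| ≥ 1 - r^(2n-1)`, with equality at `z = -r`.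
The products converge (each factor is `1 + O(r^(2n-1))`), so the bound passes to the limit of
the partial products. At `-r` all factors are real eighth powers, hence `J(-r) = -16 r P` with
`P ≥ 0`, which gives both the maximum and the sign.
-/

theorem hasProd_le_of_nonneg {ι α : Type*} [CommMonoidWithZero α] [PartialOrder α]
    [ZeroLEOneClass α] [PosMulMono α] [TopologicalSpace α] [OrderClosedTopology α]
    {f g : ι → α} {a b : α} (hf₀ : ∀ i, 0 ≤ f i) (h : ∀ i, f i ≤ g i)
    (hf : HasProd f a) (hg : HasProd g b) : a ≤ b :=
  le_of_tendsto_of_tendsto' hf hg fun _ ↦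
    Finset.prod_le_prod (fun i _ ↦ hf₀ i) fun i _ ↦ h i

section NormedField

variable {𝕜 : Type*} [NormedField 𝕜]

def jFactor (z : 𝕜) (n : ℕ) : 𝕜 :=
  ((1 + z ^ (2 * n + 2)) / (1 + z ^ (2 * n + 1))) ^ 8

theorem one_sub_norm_pow_le_norm_one_add_pow (z : 𝕜) (k : ℕ) :
    1 - ‖z‖ ^ k ≤ ‖1 + z ^ k‖ := by
  simpa using norm_sub_le_norm_add (1 : 𝕜) (z ^ k)

theorem one_add_pow_ne_zero {z : 𝕜} (hz : ‖z‖ < 1) {k : ℕ} (hk : k ≠ 0) :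
    1 + z ^ k ≠ 0 :=
  norm_pos_iff.1 <| (sub_pos.2 (pow_lt_one₀ (norm_nonneg z) hz hk)).trans_le
    (one_sub_norm_pow_le_norm_one_add_pow z k)

theorem norm_one_add_pow_succ_div_sub_one_le {z : 𝕜} (hz : ‖z‖ < 1) (k : ℕ) :
    ‖(1 + z ^ (k + 2)) / (1 + z ^ (k + 1)) - 1‖ ≤ 2 / (1 - ‖z‖) * ‖z‖ ^ (k + 1) := by
  have hq := norm_nonneg z
  have hden : 1 - ‖z‖ ≤ ‖1 + z ^ (k + 1)‖ :=
    (sub_le_sub_left (pow_le_of_le_one hq hz.le k.succ_ne_zero) 1).trans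
      (one_sub_norm_pow_le_norm_one_add_pow z _)
  have hnum : ‖z ^ (k + 1) * (z - 1)‖ ≤ ‖z‖ ^ (k + 1) * 2 := by
    rw [norm_mul, norm_pow]
    gcongr
    linarith [norm_sub_le z 1, norm_one (α := 𝕜)]
  rw [div_sub_one (one_add_pow_ne_zero hz k.succ_ne_zero),
    show 1 + z ^ (k + 2) - (1 + z ^ (k + 1)) = z ^ (k + 1) * (z - 1) by ring, norm_div,
    div_mul_eq_mul_div, mul_comm 2]
  gcongr

theorem norm_jFactor_le {z : 𝕜} (hz : ‖z‖ < 1) (n : ℕ) :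
    ‖jFactor z n‖ ≤ jFactor (-‖z‖) n := by
  have hnum : ‖1 + z ^ (2 * n + 2)‖ ≤ 1 + ‖z‖ ^ (2 * n + 2) := by
    simpa using norm_add_le (1 : 𝕜) (z ^ (2 * n + 2))
  have hden := one_sub_norm_pow_le_norm_one_add_pow z (2 * n + 1)
  have hden_pos : 0 < 1 - ‖z‖ ^ (2 * n + 1) :=
    sub_pos.2 (pow_lt_one₀ (norm_nonneg z) hz (by omega))
  rw [jFactor, jFactor, Even.neg_pow ⟨n + 1, by ring⟩, Odd.neg_pow ⟨n, by ring⟩, norm_pow,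
    norm_div, ← sub_eq_add_neg]
  gcongr

variable [CompleteSpace 𝕜]

theorem multipliable_one_add_pow_div {z : 𝕜} (hz : ‖z‖ < 1) :
    Multipliable fun n : ℕ ↦ (1 + z ^ (2 * n + 2)) / (1 + z ^ (2 * n + 1)) := by
  have hgeom : Summable fun n : ℕ ↦ 2 / (1 - ‖z‖) * ‖z‖ * (‖z‖ ^ 2) ^ n :=
    (summable_geometric_of_lt_one (by positivity)
      (pow_lt_one₀ (norm_nonneg z) hz two_ne_zero)).mul_left _
  have hsum : Summable fun n : ℕ ↦ ‖(1 + z ^ (2 * n + 2)) / (1 + z ^ (2 * n + 1)) - 1‖ :=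
    hgeom.of_nonneg_of_le (fun _ ↦ norm_nonneg _) fun n ↦ by
      convert norm_one_add_pow_succ_div_sub_one_le hz (2 * n) using 1
      ring
  simpa using multipliable_one_add_of_summable hsum

theorem multipliable_jFactor {z : 𝕜} (hz : ‖z‖ < 1) : Multipliable (jFactor z) :=
  (multipliable_one_add_pow_div hz).pow 8

end NormedField

theorem jFactor_nonneg (x : ℝ) (n : ℕ) : 0 ≤ jFactor x n :=
  Even.pow_nonneg (by decide) _

theorem modularJ_eq_mul_tprod (z : ℂ) : modularJ z = 16 * z * ∏' n, jFactor z n := by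
  simp only [modularJ, jFactor]
  congr! 7

theorem modularJ_ofReal {x : ℝ} (hx : |x| < 1) :
    modularJ x = ((16 * x * ∏' n, jFactor x n : ℝ) : ℂ) := by
  have hprod := (multipliable_jFactor (𝕜 := ℝ) (by simpa using hx)).hasProd.map
    Complex.ofRealHom Complex.continuous_ofReal
  have hfactor : Complex.ofRealHom ∘ jFactor x = jFactor (x : ℂ) := by
    funext n
    simp [jFactor]
  rw [hfactor] at hprod
  rw [modularJ_eq_mul_tprod, hprod.tprod_eq, Complex.ofRealHom_eq_coe,
    Complex.ofReal_mul, Complex.ofReal_mul, Complex.ofReal_ofNat]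

theorem norm_modularJ_le {z : ℂ} (hz : ‖z‖ < 1) :
    ‖modularJ z‖ ≤ 16 * ‖z‖ * ∏' n, jFactor (-‖z‖) n := by
  rw [modularJ_eq_mul_tprod, norm_mul, norm_mul, (multipliable_jFactor hz).norm_tprod,
    Complex.norm_ofNat]
  gcongr
  exact hasProd_le_of_nonneg (fun _ ↦ norm_nonneg _) (norm_jFactor_le hz)
    (multipliable_jFactor hz).norm.hasProd
    (multipliable_jFactor (𝕜 := ℝ) (by simpa using hz)).hasProd

/-- For `0 < r < 1`, the maximum of `|J|` on the circle `|z| = r` is attained at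
`z = -r`, and there `|J(-r)| = -J(-r)` (i.e. `J(-r)` is real and nonpositive). -/
theorem modularJ_max_on_circle (r : ℝ) (hr0 : 0 < r) (hr1 : r < 1) :
    (∀ z : ℂ, ‖z‖ = r → ‖modularJ z‖ ≤ ‖modularJ (-r)‖) ∧
    ‖modularJ (-r)‖ = -((modularJ (-r)).re) := by
  have hP : 0 ≤ ∏' n, jFactor (-r) n := tprod_nonneg (jFactor_nonneg (-r))
  have hJ : modularJ (-r) = ((-(16 * r * ∏' n, jFactor (-r) n) : ℝ) : ℂ) := by
    rw [← Complex.ofReal_neg, modularJ_ofReal (by rwa [abs_neg, abs_of_pos hr0])]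
    congr 1
    ring
  have hnorm : ‖modularJ (-r)‖ = 16 * r * ∏' n, jFactor (-r) n := by
    rw [hJ, Complex.norm_real, norm_neg, Real.norm_of_nonneg (by positivity)]
  refine ⟨fun z hz ↦ ?_, by rw [hnorm, hJ, Complex.ofReal_re, neg_neg]⟩
  rw [hnorm, ← hz]
  exact norm_modularJ_le (hz.trans_lt hr1)
end
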